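/- arXiv:1905.00701 — 2 statements merged into one kernel-verified Lean document; each statement's English description precedes it below -/
import Mathlib

section
/- Let f, g, h be nonzero polynomials in k[x,y] with m(f) > m(g) and h arbitrary nonzero. Then the strict transforms satisfy (g + h·f)' = g' + x^{m(h)+m(f)-m(g)} · h' · f', and moreover m(g + h·f) = m(g). -/
open MvPolynomial

/-- The multiplicity of a polynomial at the origin: the smallest total degree
appearing with nonzero coefficient. -/
noncomputable def mOrd {k : Type*} [CommSemiring k] (p : MvPolynomial (Fin 2) k) : ℕ :=
  sInf {n : ℕ | homogeneousComponent n p ≠ 0}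

/-- The substitution `y ↦ x·y`, i.e. `p(x, x·y)`. -/
noncomputable def blowSub {k : Type*} [CommSemiring k] (p : MvPolynomial (Fin 2) k) :
    MvPolynomial (Fin 2) k :=
  aeval ![X 0, X 0 * X 1] p

lemma mOrd_set_nonempty {k : Type*} [CommSemiring k] {p : MvPolynomial (Fin 2) k}
    (hp : p ≠ 0) : {n : ℕ | homogeneousComponent n p ≠ 0}.Nonempty := by
  by_contra hcon
  apply hp
  rw [Set.not_nonempty_iff_eq_empty] at hcon
  have : ∀ n, homogeneousComponent n p = 0 := by
    intro n
    by_contra hn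
    exact Set.eq_empty_iff_forall_notMem.mp hcon n hn
  calc p = ∑ i ∈ Finset.range (p.totalDegree + 1), homogeneousComponent i p :=
        (sum_homogeneousComponent p).symm
    _ = 0 := by simp [this]

lemma homogeneousComponent_mOrd_ne_zero {k : Type*} [CommSemiring k]
    {p : MvPolynomial (Fin 2) k} (hp : p ≠ 0) :
    homogeneousComponent (mOrd p) p ≠ 0 :=
  Nat.sInf_mem (mOrd_set_nonempty hp)

lemma homogeneousComponent_eq_zero_of_lt_mOrd {k : Type*} [CommSemiring k]
    {p : MvPolynomial (Fin 2) k} {n : ℕ} (hn : n < mOrd p) :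
    homogeneousComponent n p = 0 := by
  by_contra hcon
  exact absurd (Nat.sInf_le hcon) (Nat.not_le.mpr hn)

lemma coeff_eq_zero_of_lt_mOrd {k : Type*} [CommSemiring k]
    {p : MvPolynomial (Fin 2) k} {d : Fin 2 →₀ ℕ} (hd : d.degree < mOrd p) :
    coeff d p = 0 := by
  have h := homogeneousComponent_eq_zero_of_lt_mOrd hd
  have := congrArg (coeff d) h
  rwa [coeff_homogeneousComponent, if_pos rfl, coeff_zero] at this

lemma homogeneousComponent_mul_eq_zero {k : Type*} [CommSemiring k]
    {p q : MvPolynomial (Fin 2) k} {n : ℕ} (hn : n < mOrd p + mOrd q) :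
    homogeneousComponent n (p * q) = 0 := by
  ext d
  rw [coeff_homogeneousComponent, coeff_zero]
  split_ifs with hdeg
  · rw [coeff_mul]
    apply Finset.sum_eq_zero
    rintro ⟨a, b⟩ hab
    rw [Finset.HasAntidiagonal.mem_antidiagonal] at hab
    have hsum : a.degree + b.degree = n := by
      rw [← hdeg, ← hab]
      simp [Finsupp.degree_eq_weight_one, map_add]
    have : a.degree < mOrd p ∨ b.degree < mOrd q := by omega
    rcases this with h1 | h1
    · rw [coeff_eq_zero_of_lt_mOrd h1, zero_mul]
    · rw [coeff_eq_zero_of_lt_mOrd h1, mul_zero]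
  · rfl

theorem stmt10 {k : Type*} [Field k]
    (f g h f' g' h' : MvPolynomial (Fin 2) k)
    (hf : f ≠ 0) (hg : g ≠ 0) (hh : h ≠ 0)
    (hm : mOrd g < mOrd f)
    (hne : g + h * f ≠ 0)
    (hf' : blowSub f = X 0 ^ mOrd f * f')
    (hg' : blowSub g = X 0 ^ mOrd g * g')
    (hh' : blowSub h = X 0 ^ mOrd h * h') :
    mOrd (g + h * f) = mOrd g ∧
    blowSub (g + h * f) =
      X 0 ^ mOrd (g + h * f) *
        (g' + X 0 ^ (mOrd h + mOrd f - mOrd g) * (h' * f')) := by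
  have hlt : mOrd g < mOrd h + mOrd f := lt_of_lt_of_le hm (Nat.le_add_left _ _)
  have key : ∀ n ≤ mOrd g,
      homogeneousComponent n (g + h * f) = homogeneousComponent n g := by
    intro n hn
    rw [map_add, homogeneousComponent_mul_eq_zero (lt_of_le_of_lt hn hlt), add_zero]
  have hmord : mOrd (g + h * f) = mOrd g := by
    have hmem : homogeneousComponent (mOrd g) (g + h * f) ≠ 0 := by
      rw [key _ le_rfl]; exact homogeneousComponent_mOrd_ne_zero hg
    have hle : mOrd (g + h * f) ≤ mOrd g := Nat.sInf_le hmem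
    rcases Nat.lt_or_ge (mOrd (g + h * f)) (mOrd g) with hlt' | hge
    · exfalso
      have := Nat.sInf_mem (mOrd_set_nonempty hne)
      rw [show sInf {n : ℕ | homogeneousComponent n (g + h * f) ≠ 0} = mOrd (g + h * f)
        from rfl] at this
      rw [Set.mem_setOf_eq, key _ (le_of_lt hlt')] at this
      exact this (homogeneousComponent_eq_zero_of_lt_mOrd hlt')
    · exact le_antisymm hle hge
  refine ⟨hmord, ?_⟩
  have hsplit : blowSub (g + h * f) = blowSub g + blowSub h * blowSub f := by
    simp [blowSub, map_add, map_mul]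
  rw [hsplit, hf', hg', hh', hmord]
  have hpow : (X 0 : MvPolynomial (Fin 2) k) ^ (mOrd h + mOrd f)
      = X 0 ^ mOrd g * X 0 ^ (mOrd h + mOrd f - mOrd g) := by
    rw [← pow_add]; congr 1; omega
  calc X 0 ^ mOrd g * g' + X 0 ^ mOrd h * h' * (X 0 ^ mOrd f * f')
      = X 0 ^ mOrd g * g' + X 0 ^ (mOrd h + mOrd f) * (h' * f') := by ring
    _ = X 0 ^ mOrd g * (g' + X 0 ^ (mOrd h + mOrd f - mOrd g) * (h' * f')) := by
        rw [hpow]; ring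
end

section
/- Let f, g be nonzero polynomials in k[x,y] vanishing at the origin with m(f) ≤ m(g), with lowest-degree forms F and G. The pair (f, g) is a max-order basis of the ideal (f, g) if and only if F does not divide G. (Max-order basis: for every g̃ with (f, g̃) = (f, g), one has m(g̃) ≤ m(g).) -/
open MvPolynomial

/-- The lowest-degree homogeneous component of a polynomial. -/
noncomputable def lowForm {k : Type*} [CommSemiring k] (p : MvPolynomial (Fin 2) k) :
    MvPolynomial (Fin 2) k :=
  homogeneousComponent (mOrd p) p

section Aux

variable {k : Type*} [CommRing k]

lemma lowForm_ne_zero {p : MvPolynomial (Fin 2) k} (hp : p ≠ 0) :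
    lowForm p ≠ 0 := by
  have hne : {n : ℕ | homogeneousComponent n p ≠ 0}.Nonempty := by
    by_contra h
    rw [Set.not_nonempty_iff_eq_empty] at h
    apply hp
    have := MvPolynomial.sum_homogeneousComponent p
    rw [← this]
    apply Finset.sum_eq_zero
    intro i _
    by_contra hi
    have hmem : i ∈ {n : ℕ | homogeneousComponent n p ≠ 0} := hi
    rw [h] at hmem
    exact hmem
  exact Nat.sInf_mem hne

lemma homogeneousComponent_eq_zero_of_lt {p : MvPolynomial (Fin 2) k} {n : ℕ}
    (h : n < mOrd p) : homogeneousComponent n p = 0 := by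
  by_contra hn
  exact Nat.notMem_of_lt_sInf h hn

lemma mOrd_le_degree {p : MvPolynomial (Fin 2) k} {d : Fin 2 →₀ ℕ}
    (h : coeff d p ≠ 0) : mOrd p ≤ d.degree := by
  apply Nat.sInf_le
  intro hc
  apply h
  have := congrArg (coeff d) hc
  rwa [coeff_homogeneousComponent, if_pos rfl, coeff_zero] at this

lemma degree_add (u v : Fin 2 →₀ ℕ) : (u + v).degree = u.degree + v.degree := by
  simp [Finsupp.degree_eq_weight_one, map_add]

lemma homogeneousComponent_mul_lt [IsDomain k] (p q : MvPolynomial (Fin 2) k) {n : ℕ}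
    (h : n < mOrd p + mOrd q) : homogeneousComponent n (p * q) = 0 := by
  classical
  ext d
  rw [coeff_homogeneousComponent, coeff_zero]
  split_ifs with hd
  · rw [coeff_mul]
    apply Finset.sum_eq_zero
    rintro ⟨u, v⟩ huv
    rw [Finset.HasAntidiagonal.mem_antidiagonal] at huv
    have huv' : u + v = d := huv
    show coeff u p * coeff v q = 0
    by_contra hne
    have hu : coeff u p ≠ 0 := fun h0 => hne (by simp [h0])
    have hv : coeff v q ≠ 0 := fun h0 => hne (by simp [h0])
    have h1 := mOrd_le_degree hu
    have h2 := mOrd_le_degree hv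
    have hdd : u.degree + v.degree = d.degree := by rw [← huv', degree_add]
    omega
  · rfl

lemma homogeneousComponent_mul_eq [IsDomain k] (p q : MvPolynomial (Fin 2) k) :
    homogeneousComponent (mOrd p + mOrd q) (p * q) = lowForm p * lowForm q := by
  classical
  ext d
  rw [coeff_homogeneousComponent]
  split_ifs with hd
  · rw [coeff_mul, coeff_mul]
    apply Finset.sum_congr rfl
    rintro ⟨u, v⟩ huv
    rw [Finset.HasAntidiagonal.mem_antidiagonal] at huv
    have huv' : u + v = d := huv
    show coeff u p * coeff v q = coeff u (lowForm p) * coeff v (lowForm q)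
    have hadd : u.degree + v.degree = mOrd p + mOrd q := by
      rw [← hd, ← huv', degree_add]
    unfold lowForm
    rw [coeff_homogeneousComponent, coeff_homogeneousComponent]
    by_cases hu : u.degree = mOrd p
    · have hv : v.degree = mOrd q := by omega
      rw [if_pos hu, if_pos hv]
    · rw [if_neg hu]
      by_cases hup : coeff u p = 0
      · simp [hup]
      · have := mOrd_le_degree hup
        have hv : v.degree < mOrd q := by omega
        have : coeff v q = 0 := by
          by_contra hvq
          have := mOrd_le_degree hvq
          omega
        simp [this]
  · rw [coeff_mul]
    symm
    apply Finset.sum_eq_zero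
    rintro ⟨u, v⟩ huv
    rw [Finset.HasAntidiagonal.mem_antidiagonal] at huv
    have huv' : u + v = d := huv
    show coeff u (lowForm p) * coeff v (lowForm q) = 0
    unfold lowForm
    rw [coeff_homogeneousComponent, coeff_homogeneousComponent]
    split_ifs with h1 h2
    · exact absurd (by rw [← huv', degree_add, h1, h2]) hd
    all_goals simp

lemma mOrd_mul [IsDomain k] {p q : MvPolynomial (Fin 2) k} (hp : p ≠ 0) (hq : q ≠ 0) :
    mOrd (p * q) = mOrd p + mOrd q := by
  have hne : homogeneousComponent (mOrd p + mOrd q) (p * q) ≠ 0 := by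
    rw [homogeneousComponent_mul_eq]
    exact mul_ne_zero (lowForm_ne_zero hp) (lowForm_ne_zero hq)
  apply le_antisymm
  · exact Nat.sInf_le hne
  · by_contra h
    push_neg at h
    exact absurd (homogeneousComponent_mul_lt p q h) (lowForm_ne_zero (mul_ne_zero hp hq))

lemma lowForm_mul [IsDomain k] {p q : MvPolynomial (Fin 2) k} (hp : p ≠ 0) (hq : q ≠ 0) :
    lowForm (p * q) = lowForm p * lowForm q := by
  rw [lowForm, mOrd_mul hp hq, homogeneousComponent_mul_eq]

lemma mOrd_of_homogeneous {p : MvPolynomial (Fin 2) k} {n : ℕ}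
    (hp : p.IsHomogeneous n) (h0 : p ≠ 0) : mOrd p = n := by
  have hmem : ∀ m, homogeneousComponent m p = if m = n then p else 0 := fun m =>
    homogeneousComponent_of_mem hp
  apply le_antisymm
  · apply Nat.sInf_le
    rw [Set.mem_setOf, hmem n, if_pos rfl]
    exact h0
  · have hn : n ∈ {m : ℕ | homogeneousComponent m p ≠ 0} := by
      rw [Set.mem_setOf, hmem n, if_pos rfl]; exact h0
    have hs : mOrd p ∈ {m : ℕ | homogeneousComponent m p ≠ 0} := Nat.sInf_mem ⟨n, hn⟩
    by_contra hlt
    push_neg at hlt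
    rw [Set.mem_setOf, hmem, if_neg (by omega)] at hs
    exact hs rfl

lemma lowForm_of_homogeneous {p : MvPolynomial (Fin 2) k} {n : ℕ}
    (hp : p.IsHomogeneous n) (h0 : p ≠ 0) : lowForm p = p := by
  rw [lowForm, mOrd_of_homogeneous hp h0, homogeneousComponent_of_mem hp, if_pos rfl]

lemma lowForm_isHomogeneous (p : MvPolynomial (Fin 2) k) :
    (lowForm p).IsHomogeneous (mOrd p) :=
  homogeneousComponent_isHomogeneous _ _

lemma exists_irreducible_factor {k : Type*} [Field k]
    (h : MvPolynomial (Fin 2) k) (hne : h ≠ 0)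
    (h0 : eval (fun _ : Fin 2 => (0 : k)) h = 0) :
    ∃ p : MvPolynomial (Fin 2) k, Irreducible p ∧ p ∣ h ∧
      eval (fun _ : Fin 2 => (0 : k)) p = 0 := by
  induction h using UniqueFactorizationMonoid.induction_on_prime with
  | h₁ => exact absurd rfl hne
  | h₂ x hx =>
    exfalso
    have : IsUnit (eval (fun _ : Fin 2 => (0 : k)) x) := hx.map _
    exact this.ne_zero h0
  | h₃ a p ha hp ih =>
    by_cases hpe : eval (fun _ : Fin 2 => (0 : k)) p = 0
    · exact ⟨p, hp.irreducible, dvd_mul_right p a, hpe⟩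
    · have hae : eval (fun _ : Fin 2 => (0 : k)) a = 0 := by
        rw [map_mul] at h0
        rcases mul_eq_zero.1 h0 with h | h
        · exact absurd h hpe
        · exact h
      obtain ⟨q, hq1, hq2, hq3⟩ := ih ha hae
      exact ⟨q, hq1, hq2.mul_left p, hq3⟩

end Aux

theorem stmt13 {k : Type*} [Field k] [IsAlgClosed k] [CharZero k]
    (f g : MvPolynomial (Fin 2) k) (hf : f ≠ 0) (hg : g ≠ 0)
    (hf0 : eval (fun _ : Fin 2 => (0 : k)) f = 0)
    (hg0 : eval (fun _ : Fin 2 => (0 : k)) g = 0)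
    (hm : mOrd f ≤ mOrd g)
    (hcoprime : ¬ ∃ p : MvPolynomial (Fin 2) k,
      Irreducible p ∧ p ∣ f ∧ p ∣ g ∧ eval (fun _ : Fin 2 => (0 : k)) p = 0) :
    (∀ g' : MvPolynomial (Fin 2) k, g' ≠ 0 →
        Ideal.span {f, g'} = Ideal.span {f, g} → mOrd g' ≤ mOrd g) ↔
      ¬ lowForm f ∣ lowForm g := by
  have hF : lowForm f ≠ 0 := lowForm_ne_zero hf
  have hG : lowForm g ≠ 0 := lowForm_ne_zero hg
  constructor
  · -- max-order basis → ¬ F ∣ G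
    intro hmax
    rintro ⟨q, hq⟩
    have hqne : q ≠ 0 := by
      rintro rfl
      rw [mul_zero] at hq
      exact hG hq
    -- order of q
    have hFq : mOrd (lowForm f) + mOrd q = mOrd g := by
      have h1 : mOrd (lowForm f * q) = mOrd (lowForm f) + mOrd q := mOrd_mul hF hqne
      rw [← hq] at h1
      rw [← h1, mOrd_of_homogeneous (lowForm_isHomogeneous g) hG]
    have hFm : mOrd (lowForm f) = mOrd f :=
      mOrd_of_homogeneous (lowForm_isHomogeneous f) hF
    have hfq : mOrd (f * q) = mOrd g := by
      rw [mOrd_mul hf hqne, ← hFm, hFq]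
    -- the candidate g'
    set g' : MvPolynomial (Fin 2) k := g - f * q with hg'def
    have hg'ne : g' ≠ 0 := by
      intro h0
      have hgeq : g = f * q := by
        have := sub_eq_zero.1 h0
        exact this
      obtain ⟨p, hp1, hp2, hp3⟩ := exists_irreducible_factor f hf hf0
      exact hcoprime ⟨p, hp1, hp2, hgeq ▸ hp2.mul_right q, hp3⟩
    have hspan : Ideal.span {f, g'} = Ideal.span ({f, g} : Set (MvPolynomial (Fin 2) k)) := by
      apply le_antisymm
      · rw [Ideal.span_le]
        rintro x (rfl | rfl)
        · exact Ideal.subset_span (Set.mem_insert _ _)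
        · exact Ideal.mem_span_pair.2 ⟨-q, 1, by ring⟩
      · rw [Ideal.span_le]
        rintro x (rfl | rfl)
        · exact Ideal.subset_span (Set.mem_insert _ _)
        · exact Ideal.mem_span_pair.2 ⟨q, 1, by rw [hg'def]; ring⟩
    have hle := hmax g' hg'ne hspan
    -- but mOrd g' > mOrd g
    have hcomp : ∀ n, n ≤ mOrd g → homogeneousComponent n g' = 0 := by
      intro n hn
      rw [hg'def, map_sub]
      rcases lt_or_eq_of_le hn with hlt | heq
      · rw [homogeneousComponent_eq_zero_of_lt hlt,
          homogeneousComponent_eq_zero_of_lt (hfq ▸ hlt), sub_zero]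
      · subst heq
        have h1 : homogeneousComponent (mOrd g) g = lowForm g := rfl
        have h2 : homogeneousComponent (mOrd g) (f * q) = lowForm (f * q) := by
          rw [lowForm, hfq]
        rw [h1, h2, lowForm_mul hf hqne]
        have h3 : lowForm f * lowForm q = lowForm g := by
          rw [← lowForm_of_homogeneous (lowForm_isHomogeneous f) hF, ← lowForm_mul hF hqne,
            ← hq, lowForm_of_homogeneous (lowForm_isHomogeneous g) hG]
        rw [h3, sub_self]
    have := hcomp (mOrd g') hle
    exact lowForm_ne_zero hg'ne this
  · -- ¬ F ∣ G → max-order basis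
    intro hndvd g' hg' hspan
    by_contra hlt
    push_neg at hlt
    have hgmem : g ∈ Ideal.span ({f, g'} : Set (MvPolynomial (Fin 2) k)) := by
      rw [hspan]
      exact Ideal.subset_span (Set.mem_insert_of_mem _ rfl)
    obtain ⟨a, b, hab⟩ := Ideal.mem_span_pair.1 hgmem
    have hbg' : ∀ n, n ≤ mOrd g → homogeneousComponent n (b * g') = 0 := by
      intro n hn
      by_cases hb : b = 0
      · simp [hb]
      · apply homogeneousComponent_eq_zero_of_lt
        rw [mOrd_mul hb hg']
        omega
    have hane : a ≠ 0 := by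
      rintro rfl
      rw [zero_mul, zero_add] at hab
      have := hbg' (mOrd g) le_rfl
      rw [hab] at this
      exact hG this
    have haf : mOrd (a * f) = mOrd a + mOrd f := mOrd_mul hane hf
    rcases lt_trichotomy (mOrd a + mOrd f) (mOrd g) with hc | hc | hc
    · -- component of g at degree mOrd a + mOrd f would be nonzero but below mOrd g
      have h1 : homogeneousComponent (mOrd a + mOrd f) (a * f + b * g') = 0 := by
        rw [hab]
        exact homogeneousComponent_eq_zero_of_lt hc
      rw [map_add, hbg' _ (le_of_lt hc), add_zero, homogeneousComponent_mul_eq] at h1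
      exact mul_ne_zero (lowForm_ne_zero hane) hF h1
    · -- F divides G
      apply hndvd
      have h1 : lowForm g = homogeneousComponent (mOrd g) (a * f + b * g') := by
        rw [hab]; rfl
      rw [map_add, hbg' _ le_rfl, add_zero, ← hc, homogeneousComponent_mul_eq] at h1
      exact ⟨lowForm a, by rw [h1, mul_comm]⟩
    · -- G would be zero
      have h1 : lowForm g = homogeneousComponent (mOrd g) (a * f + b * g') := by
        rw [hab]; rfl
      rw [map_add, hbg' _ le_rfl, add_zero,
        homogeneousComponent_mul_lt a f hc] at h1
      exact hG h1
end
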